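/- arXiv:2305.09102 — 2 statements merged into one kernel-verified Lean document; each statement's English description precedes it below -/
import Mathlib

section
/- (Main theorem, core step) In the sequential extended Wigner's friend scenario, any behaviour satisfying the Local Friendliness constraints is local deterministic: if p(ã, b | x̃, y) satisfies (i) AOE: there exists a joint distribution p(ã, b, c | x̃, y) with p(ã | b, c, x̃=i, y) = δ_{ã, c_i} for 1 ≤ i ≤ R, and (ii) Local agency: p(b, c₁,…,c_j | x̃, y) is independent of those components of x̃ beyond index j, and p(ã, c | x̃, y) = p(ã, c | x̃), then p(ã,b|x̃,y) can be written as p(ã,b|x̃=i,y) = ∑_c δ_{ã,c_i} · p̂(b | c₁,…,c_i, y) · p̂(c) for i ≤ R, where p̂(c) = p(c | x̃ = R+1) and p̂(b | c₁,…,c_i, y) = p(b | c₁,…,c_i, x̃=R+1, y); consequently the Alice marginal p(ã | x̃=i, y) is a mixture over c of deterministic responses δ_{ã,c_i}, and the full behaviour lies in the convex hull of behaviours that are deterministic on all Alice inputs i ≤ R. -/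
/-!
Fix Bob's setting `y` and a round `i`, and group the friend's records `c` by their prefix
`c₁ … c_i`. By AOE, on each such class Alice's outcome at `x̃ = i` is the constant `c_i`; by
local agency, the joint law of Bob's outcome and the prefix at `x̃ = i` equals the one at
`x̃ = R + 1`, where no round is interrupted. Hence the observed behaviour is the mixture, with
weights `p̂(c) = p(c | x̃ = R + 1)` (independent of `y` by the second local agency condition), of
the behaviours `p(· | c)` that answer `δ_{ã, c_i}` at every round `i`.
-/

open Finset

theorem Finset.sum_eq_sum_of_fiberwise_eq {α κ M : Type*} [Fintype α] [DecidableEq κ]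
    [AddCommMonoid M] (k : α → κ) {φ ψ : α → M}
    (h : ∀ g, ∑ c with k c = k g, φ c = ∑ c with k c = k g, ψ c) :
    ∑ c, φ c = ∑ c, ψ c := by
  have hk : ∀ c ∈ (univ : Finset α), k c ∈ univ.image k :=
    fun c _ => mem_image_of_mem k (mem_univ c)
  rw [← sum_fiberwise_of_maps_to hk, ← sum_fiberwise_of_maps_to hk]
  refine sum_congr rfl fun κ hκ => ?_
  obtain ⟨g, -, rfl⟩ := mem_image.1 hκ
  exact h g

section PrefixClass

variable {A : Type} [Fintype A] [DecidableEq A] {R : ℕ}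

def prefixClass (i : Fin R) (g : Fin R → A) : Finset (Fin R → A) :=
  univ.filter (fun c : Fin R → A => ∀ j ≤ i, c j = g j)

theorem mem_prefixClass {i : Fin R} {c g : Fin R → A} :
    c ∈ prefixClass i g ↔ ∀ j ≤ i, c j = g j := by
  simp [prefixClass]

theorem apply_eq_of_mem_prefixClass {i : Fin R} {c g : Fin R → A} (hc : c ∈ prefixClass i g) :
    c i = g i :=
  mem_prefixClass.1 hc i le_rfl

theorem prefixClass_eq_of_mem {i : Fin R} {c g : Fin R → A} (hc : c ∈ prefixClass i g) :
    prefixClass i c = prefixClass i g := by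
  ext d
  simp only [mem_prefixClass]
  exact forall₂_congr fun j hj => by rw [mem_prefixClass.1 hc j hj]

theorem sum_eq_sum_of_sum_prefixClass_eq {M : Type*} [AddCommMonoid M] (i : Fin R)
    {φ ψ : (Fin R → A) → M}
    (h : ∀ g, ∑ c ∈ prefixClass i g, φ c = ∑ c ∈ prefixClass i g, ψ c) :
    ∑ c, φ c = ∑ c, ψ c := by
  refine sum_eq_sum_of_fiberwise_eq (fun c (j : {j // j ≤ i}) => c j) fun g => ?_
  convert h g using 2 <;>
  · ext c
    simp [mem_prefixClass, funext_iff]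

end PrefixClass

/-! `P a b c x y` is the joint law `p(ã, b, c | x̃, y)`; the round `x̃ = R + 1` is
`Fin.last R`. -/

noncomputable section RecordMarginal

variable {A B Y : Type} [Fintype A] [Fintype B] {R : ℕ}
  (P : A → B → (Fin R → A) → Fin (R + 1) → Y → ℝ)

def recordMarginal (y : Y) (c : Fin R → A) : ℝ :=
  ∑ a, ∑ b, P a b c (Fin.last R) y

def NoSignallingFromBob : Prop :=
  ∀ (a : A) (c : Fin R → A) (x : Fin (R + 1)) (y y' : Y),
    ∑ b, P a b c x y = ∑ b, P a b c x y'

variable {P}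

theorem recordMarginal_nonneg (hpos : ∀ a b c x y, 0 ≤ P a b c x y) (y : Y) (c : Fin R → A) :
    0 ≤ recordMarginal P y c :=
  sum_nonneg fun _ _ => sum_nonneg fun _ _ => hpos _ _ _ _ _

theorem le_recordMarginal (hpos : ∀ a b c x y, 0 ≤ P a b c x y) (a : A) (b : B)
    (c : Fin R → A) (y : Y) : P a b c (Fin.last R) y ≤ recordMarginal P y c :=
  (single_le_sum (fun b' _ => hpos a b' c _ y) (mem_univ b)).trans
    (single_le_sum (f := fun a => ∑ b, P a b c (Fin.last R) y)
      (fun _ _ => sum_nonneg fun _ _ => hpos _ _ _ _ _) (mem_univ a))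

theorem NoSignallingFromBob.recordMarginal_eq (hLA2 : NoSignallingFromBob P) (y y' : Y)
    (c : Fin R → A) : recordMarginal P y c = recordMarginal P y' c :=
  sum_congr rfl fun a _ => hLA2 a c _ y y'

theorem sum_recordMarginal (hnorm : ∀ x y, ∑ a, ∑ b, ∑ c, P a b c x y = 1) (y : Y) :
    ∑ c, recordMarginal P y c = 1 := by
  simp only [recordMarginal]
  rw [sum_comm, ← hnorm (Fin.last R) y]
  exact sum_congr rfl fun _ _ => sum_comm

end RecordMarginal

noncomputable section Prefix

variable {A B Y : Type} [Fintype A] [DecidableEq A] {R : ℕ}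
  (P : A → B → (Fin R → A) → Fin (R + 1) → Y → ℝ)

def AbsoluteObservedEvents : Prop :=
  ∀ (a : A) (b : B) (c : Fin R → A) (i : Fin R) (y : Y), a ≠ c i → P a b c i.castSucc y = 0

def NoSignallingToEarlierRecords : Prop :=
  ∀ (i : Fin R) (x x' : Fin (R + 1)), i.castSucc ≤ x → i.castSucc ≤ x' →
    ∀ (b : B) (y : Y) (g : Fin R → A),
      ∑ a, ∑ c ∈ prefixClass i g, P a b c x y = ∑ a, ∑ c ∈ prefixClass i g, P a b c x' y

/-- `p(b, c₁ … c_i = g₁ … g_i | x̃ = R + 1, y)`. -/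
def prefixJoint (i : Fin R) (y : Y) (b : B) (g : Fin R → A) : ℝ :=
  ∑ a, ∑ c ∈ prefixClass i g, P a b c (Fin.last R) y

variable {P}

theorem sum_prefixClass_eq_ite_mul_prefixJoint (hAOE : AbsoluteObservedEvents P)
    (hLA1 : NoSignallingToEarlierRecords P) (i : Fin R) (a : A) (b : B) (y : Y)
    (g : Fin R → A) :
    ∑ c ∈ prefixClass i g, P a b c i.castSucc y
      = (if a = g i then 1 else 0) * prefixJoint P i y b g := by
  calc ∑ c ∈ prefixClass i g, P a b c i.castSucc y
      = (if a = g i then 1 else 0) * ∑ a', ∑ c ∈ prefixClass i g, P a' b c i.castSucc y := by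
        split_ifs with ha
        · rw [one_mul, sum_comm]
          refine sum_congr rfl fun c hc => (sum_eq_single (f := fun a' => P a' b c i.castSucc y)
            a (fun a' _ ha' => ?_) (absurd (mem_univ a))).symm
          exact hAOE a' b c i y (by rwa [apply_eq_of_mem_prefixClass hc, ← ha])
        · rw [zero_mul]
          exact sum_eq_zero fun c hc => hAOE a b c i y (by rwa [apply_eq_of_mem_prefixClass hc])
    _ = _ := congrArg _ (hLA1 i _ _ le_rfl (Fin.le_last _) b y g)

variable [Fintype B] (P)

def prefixMarginal (i : Fin R) (y : Y) (g : Fin R → A) : ℝ :=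
  ∑ b, prefixJoint P i y b g

/-- `p̂(b | c₁ … c_i, y)`; it is `0` when the prefix has probability `0`. -/
def bobConditional (i : Fin R) (y : Y) (b : B) (g : Fin R → A) : ℝ :=
  prefixJoint P i y b g / prefixMarginal P i y g

/-- `p(ã, b | x̃, y, c)` in the local model: at round `i` Alice answers `c_i` and Bob samples
`p̂(b | c₁ … c_i, y)`. -/
def conditionalBehaviour (c : Fin R → A) : A → B → Fin (R + 1) → Y → ℝ :=
  fun a b x y => Fin.lastCases (P a b c (Fin.last R) y / recordMarginal P y c)
    (fun i => (if a = c i then 1 else 0) * bobConditional P i y b c) x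

def IsAliceDeterministic (q : A → B → Fin (R + 1) → Y → ℝ) : Prop :=
  ∀ (i : Fin R) (a : A) (y : Y), ∑ b, q a b i.castSucc y = 0 ∨ ∑ b, q a b i.castSucc y = 1

variable {P}

theorem sum_prefixClass_recordMarginal (i : Fin R) (y : Y) (g : Fin R → A) :
    ∑ c ∈ prefixClass i g, recordMarginal P y c = prefixMarginal P i y g := by
  simp only [recordMarginal, prefixMarginal, prefixJoint]
  rw [sum_comm]
  exact (sum_congr rfl fun _ _ => sum_comm).trans sum_comm

theorem sum_prefixClass_mul_recordMarginal (i : Fin R) (y : Y) (g : Fin R → A)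
    {f : (Fin R → A) → ℝ} (hf : ∀ c ∈ prefixClass i g, f c = f g) :
    ∑ c ∈ prefixClass i g, f c * recordMarginal P y c = f g * prefixMarginal P i y g := by
  rw [← sum_prefixClass_recordMarginal, mul_sum]
  exact sum_congr rfl fun c hc => by rw [hf c hc]

theorem prefixJoint_eq_zero_of_prefixMarginal_eq_zero (hpos : ∀ a b c x y, 0 ≤ P a b c x y)
    {i : Fin R} {y : Y} {g : Fin R → A} (h : prefixMarginal P i y g = 0) (b : B) :
    prefixJoint P i y b g = 0 :=
  (sum_eq_zero_iff_of_nonneg fun _ _ => sum_nonneg fun _ _ => sum_nonneg fun _ _ =>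
    hpos _ _ _ _ _).1 h b (mem_univ b)

theorem bobConditional_eq_of_mem {i : Fin R} {y : Y} {b : B} {c g : Fin R → A}
    (hc : c ∈ prefixClass i g) : bobConditional P i y b c = bobConditional P i y b g := by
  simp only [bobConditional, prefixMarginal, prefixJoint, prefixClass_eq_of_mem hc]

theorem sum_bobConditional_eq_zero_or_eq_one (i : Fin R) (y : Y) (g : Fin R → A) :
    ∑ b, bobConditional P i y b g = 0 ∨ ∑ b, bobConditional P i y b g = 1 := by
  simp only [bobConditional]
  rw [← sum_div, ← prefixMarginal]
  rcases eq_or_ne (prefixMarginal P i y g) 0 with h | h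
  · exact Or.inl (by rw [h, div_zero])
  · exact Or.inr (div_self h)

theorem sum_eq_sum_ite_mul_bobConditional_mul_recordMarginal
    (hpos : ∀ a b c x y, 0 ≤ P a b c x y) (hAOE : AbsoluteObservedEvents P)
    (hLA1 : NoSignallingToEarlierRecords P) (i : Fin R) (a : A) (b : B) (y : Y) :
    ∑ c, P a b c i.castSucc y
      = ∑ c, (if a = c i then 1 else 0) * bobConditional P i y b c * recordMarginal P y c := by
  refine sum_eq_sum_of_sum_prefixClass_eq i fun g => ?_
  rw [sum_prefixClass_mul_recordMarginal i y g (fun c hc => by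
      rw [apply_eq_of_mem_prefixClass hc, bobConditional_eq_of_mem hc]),
    sum_prefixClass_eq_ite_mul_prefixJoint hAOE hLA1, mul_assoc, bobConditional,
    div_mul_cancel_of_imp fun h => prefixJoint_eq_zero_of_prefixMarginal_eq_zero hpos h b]

theorem sum_sum_eq_sum_ite_mul_recordMarginal (hAOE : AbsoluteObservedEvents P)
    (hLA1 : NoSignallingToEarlierRecords P) (i : Fin R) (a : A) (y : Y) :
    ∑ b, ∑ c, P a b c i.castSucc y
      = ∑ c, (if a = c i then 1 else 0) * recordMarginal P y c := by
  rw [sum_comm]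
  refine sum_eq_sum_of_sum_prefixClass_eq i fun g => ?_
  rw [sum_comm, sum_prefixClass_mul_recordMarginal i y g (f := fun c => if a = c i then 1 else 0)
    fun c hc => by rw [apply_eq_of_mem_prefixClass hc]]
  simp only [sum_prefixClass_eq_ite_mul_prefixJoint hAOE hLA1, ← mul_sum]
  rfl

theorem isAliceDeterministic_conditionalBehaviour (c : Fin R → A) :
    IsAliceDeterministic (conditionalBehaviour P c) := by
  intro i a y
  simp only [conditionalBehaviour, Fin.lastCases_castSucc, ← mul_sum]
  rcases sum_bobConditional_eq_zero_or_eq_one (P := P) i y c with h | h <;>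
    rw [h] <;> split_ifs <;> simp

theorem behaviour_eq_sum_smul_conditionalBehaviour (hpos : ∀ a b c x y, 0 ≤ P a b c x y)
    (hAOE : AbsoluteObservedEvents P) (hLA1 : NoSignallingToEarlierRecords P)
    (hLA2 : NoSignallingFromBob P) (y₀ : Y) :
    (fun a b x y => ∑ c, P a b c x y)
      = ∑ c, recordMarginal P y₀ c • conditionalBehaviour P c := by
  funext a b x y
  simp only [Finset.sum_apply, Pi.smul_apply, smul_eq_mul, hLA2.recordMarginal_eq y₀ y]
  induction x using Fin.lastCases with
  | last =>
    simp only [conditionalBehaviour, Fin.lastCases_last]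
    refine sum_congr rfl fun c _ => (mul_div_cancel_of_imp' fun h => ?_).symm
    exact le_antisymm (h ▸ le_recordMarginal hpos a b c y) (hpos _ _ _ _ _)
  | cast i =>
    simp only [conditionalBehaviour, Fin.lastCases_castSucc]
    rw [sum_eq_sum_ite_mul_bobConditional_mul_recordMarginal hpos hAOE hLA1]
    exact sum_congr rfl fun c _ => mul_comm _ _

theorem behaviour_mem_convexHull_isAliceDeterministic (hpos : ∀ a b c x y, 0 ≤ P a b c x y)
    (hnorm : ∀ x y, ∑ a, ∑ b, ∑ c, P a b c x y = 1) (hAOE : AbsoluteObservedEvents P)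
    (hLA1 : NoSignallingToEarlierRecords P) (hLA2 : NoSignallingFromBob P) :
    (fun a b x y => ∑ c, P a b c x y) ∈ convexHull ℝ {q | IsAliceDeterministic q} := by
  cases isEmpty_or_nonempty Y with
  | inl hY => exact subset_convexHull ℝ _ fun _ _ y => hY.elim y
  | inr hY =>
    obtain ⟨y₀⟩ := hY
    rw [behaviour_eq_sum_smul_conditionalBehaviour hpos hAOE hLA1 hLA2 y₀]
    exact (convex_convexHull ℝ _).sum_mem (fun c _ => recordMarginal_nonneg hpos y₀ c)
      (sum_recordMarginal hnorm y₀)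
      fun c _ => subset_convexHull ℝ _ (isAliceDeterministic_conditionalBehaviour c)

end Prefix

/-- main theorem, core step: in the sequential extended
Wigner's friend scenario, any behaviour satisfying the Local Friendliness
constraints admits the decomposition
`p(ã,b|x̃=i,y) = ∑_c δ_{ã,c_i} · p̂(b|c₁…c_i,y) · p̂(c)` for `i ≤ R`, where
`p̂(c) = p(c|x̃=R+1)` and `p̂(b|c₁…c_i,y) = p(b|c₁…c_i,x̃=R+1,y)`; consequently
Alice's marginal at `x̃ = i` is a mixture over `c` of the deterministic
responses `δ_{ã,c_i}`, and the observed behaviour lies in the convex hull of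
behaviours deterministic on all Alice inputs `i ≤ R`.

Here `P a b c x y` is the AOE joint distribution `p(ã,b,c|x̃,y)`, with
`x̃ : Fin (R+1)` (`i.castSucc` for rounds `i ≤ R`, `Fin.last R` for `R+1`);
`hAOE` expresses `p(ã|b,c,x̃=i,y) = δ_{ã,c_i}`; `hLA1` says the joint
distribution of `b` and the records up to round `i` does not depend on the
components of `x̃` from round `i` on; `hLA2` is `p(ã,c|x̃,y) = p(ã,c|x̃)`. -/
theorem sequential_lf_is_local_deterministic {A B Y : Type}
    [Fintype A] [DecidableEq A] [Fintype B] {R : ℕ}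
    (P : A → B → (Fin R → A) → Fin (R + 1) → Y → ℝ)
    (hpos : ∀ a b c x y, 0 ≤ P a b c x y)
    (hnorm : ∀ x y, ∑ a, ∑ b, ∑ c, P a b c x y = 1)
    (hAOE : ∀ (a : A) (b : B) (c : Fin R → A) (i : Fin R) (y : Y),
      a ≠ c i → P a b c i.castSucc y = 0)
    (hLA1 : ∀ (i : Fin R) (x x' : Fin (R + 1)), i.castSucc ≤ x → i.castSucc ≤ x' →
      ∀ (b : B) (y : Y) (g : Fin R → A),
        (∑ a, ∑ c ∈ Finset.univ.filter (fun c : Fin R → A => ∀ j ≤ i, c j = g j),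
          P a b c x y)
        = ∑ a, ∑ c ∈ Finset.univ.filter (fun c : Fin R → A => ∀ j ≤ i, c j = g j),
            P a b c x' y)
    (hLA2 : ∀ (a : A) (c : Fin R → A) (x : Fin (R + 1)) (y y' : Y),
      ∑ b, P a b c x y = ∑ b, P a b c x y') :
    -- the LF decomposition of the observed behaviour for rounds `i ≤ R`
    (∀ (i : Fin R) (a : A) (b : B) (y : Y),
      (∑ c, P a b c i.castSucc y)
        = ∑ c : Fin R → A, (if a = c i then 1 else 0)
            * ((∑ a', ∑ c' ∈ Finset.univ.filter
                  (fun c' : Fin R → A => ∀ j ≤ i, c' j = c j),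
                  P a' b c' (Fin.last R) y)
                / (∑ b', ∑ a', ∑ c' ∈ Finset.univ.filter
                    (fun c' : Fin R → A => ∀ j ≤ i, c' j = c j),
                    P a' b' c' (Fin.last R) y))
            * (∑ a', ∑ b', P a' b' c (Fin.last R) y)) ∧
    -- Alice's marginal is a mixture of deterministic responses `δ_{ã,c_i}`
    (∀ (i : Fin R) (a : A) (y : Y),
      (∑ b, ∑ c, P a b c i.castSucc y)
        = ∑ c : Fin R → A, (if a = c i then 1 else 0)
            * (∑ a', ∑ b', P a' b' c (Fin.last R) y)) ∧
    -- the observed behaviour lies in the convex hull of behaviours that are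
    -- deterministic on every Alice input `i ≤ R`
    ((fun a b x y => ∑ c, P a b c x y)
      ∈ convexHull ℝ {q : A → B → Fin (R + 1) → Y → ℝ |
          ∀ (i : Fin R) (a : A) (y : Y),
            (∑ b, q a b i.castSucc y) = 0 ∨ (∑ b, q a b i.castSucc y) = 1}) := by
  exact ⟨sum_eq_sum_ite_mul_bobConditional_mul_recordMarginal hpos hAOE hLA1,
    sum_sum_eq_sum_ite_mul_recordMarginal hAOE hLA1,
    behaviour_mem_convexHull_isAliceDeterministic hpos hnorm hAOE hLA1 hLA2⟩
end

section
/- In the two-setting, two-outcome scenario, the eight CH inequalities (obtained from the stated one by relabelling inputs and outputs) together with positivity and no-signalling imply membership in the local polytope: any no-signalling behaviour p on {±1}² × {1,2}² satisfying all symmetrized CH inequalities is a convex combination of the 16 deterministic product behaviours. -/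
open Finset

/-!
Bob's two outcomes `b₀ = g 0`, `b₁ = g 1` are given a joint distribution `D`, and for each input
`x` of Alice the triple `(a, b₀, b₁)` a joint distribution with marginals `p(·,·|x,·)` and `D`.
Gluing the two triples along `D`, i.e. making Alice's two outcomes conditionally independent given
Bob's, gives weights on the deterministic strategies `(f, g)`. A three-bit distribution with
prescribed pairwise marginals is determined by its mass `t` at `(+,+,+)` and exists iff four
Bell-type inequalities hold; the CH inequalities are exactly what allows the single parameter
`d = D(+,+)` to be chosen so that these hold for both of Alice's inputs.
-/

theorem Fintype.sum_fin_two_arrow {α M : Type*} [Fintype α] [AddCommMonoid M]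
    (F : (Fin 2 → α) → M) : ∑ f, F f = ∑ a₀, ∑ a₁, F ![a₀, a₁] := by
  rw [← (finTwoArrowEquiv α).symm.sum_comp, Fintype.sum_prod_type]
  rfl

theorem mul_sum_div_sum_of_nonneg {ι : Type*} [Fintype ι] {f : ι → ℝ} (hf : ∀ i, 0 ≤ f i)
    (i : ι) : f i * (∑ j, f j) / ∑ j, f j = f i := by
  rcases eq_or_ne (∑ j, f j) 0 with h | h
  · rw [h, div_zero, (sum_eq_zero_iff_of_nonneg fun j _ => hf j).1 h i (mem_univ i)]
  · exact mul_div_cancel_right₀ _ h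

section Gluing

variable {α β γ : Type*} [Fintype α] {P : α → β → ℝ} {Q : γ → β → ℝ}

noncomputable def glue (P : α → β → ℝ) (Q : γ → β → ℝ) (a : α) (c : γ) (b : β) : ℝ :=
  P a b * Q c b / ∑ a', P a' b

theorem glue_nonneg (hP : ∀ a b, 0 ≤ P a b) (hQ : ∀ c b, 0 ≤ Q c b) (a : α) (c : γ) (b : β) :
    0 ≤ glue P Q a c b :=
  div_nonneg (mul_nonneg (hP a b) (hQ c b)) (sum_nonneg fun a' _ => hP a' b)

variable [Fintype γ]

theorem sum_glue_right (hP : ∀ a b, 0 ≤ P a b) (hPQ : ∀ b, ∑ a, P a b = ∑ c, Q c b)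
    (a : α) (b : β) : ∑ c, glue P Q a c b = P a b := by
  simp only [glue, ← sum_div, ← mul_sum, ← hPQ]
  exact mul_sum_div_sum_of_nonneg (fun a => hP a b) a

theorem sum_glue_left (hQ : ∀ c b, 0 ≤ Q c b) (hPQ : ∀ b, ∑ a, P a b = ∑ c, Q c b)
    (c : γ) (b : β) : ∑ a, glue P Q a c b = Q c b := by
  simp only [glue, ← sum_div, ← sum_mul, hPQ]
  rw [mul_comm]
  exact mul_sum_div_sum_of_nonneg (fun c => hQ c b) c

end Gluing

def IsLocal {α β X Y : Type*} [Fintype α] [Fintype β] [Fintype X] [Fintype Y]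
    [DecidableEq α] [DecidableEq β] [DecidableEq X] [DecidableEq Y]
    (p : α → β → X → Y → ℝ) : Prop :=
  ∃ w : (X → α) × (Y → β) → ℝ, (∀ fg, 0 ≤ w fg) ∧ (∑ fg, w fg = 1) ∧
    ∀ a b x y, p a b x y =
      ∑ fg, w fg * (if a = fg.1 x then 1 else 0) * (if b = fg.2 y then 1 else 0)

theorem isLocal_of_glue {α β Y : Type*} [Fintype α] [Fintype β] [Fintype Y]
    [DecidableEq α] [DecidableEq β] [DecidableEq Y]
    (p : α → β → Fin 2 → Y → ℝ) (T : Fin 2 → α → (Y → β) → ℝ) (hT : ∀ x a g, 0 ≤ T x a g)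
    (hcompat : ∀ g, ∑ a, T 0 a g = ∑ a, T 1 a g) (hnorm : ∑ g, ∑ a, T 0 a g = 1)
    (hmarg : ∀ a b x y, ∑ g, T x a g * (if b = g y then 1 else 0) = p a b x y) :
    IsLocal p := by
  have hglue : ∀ x a g, ∑ f : Fin 2 → α,
      glue (T 0) (T 1) (f 0) (f 1) g * (if a = f x then 1 else 0) = T x a g := by
    refine Fin.forall_fin_two.2 ⟨fun a g => ?_, fun a g => ?_⟩
    · simp [Fintype.sum_fin_two_arrow, mul_ite, sum_ite_irrel, sum_glue_right (hT 0) hcompat]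
    · simp [Fintype.sum_fin_two_arrow, mul_ite, sum_glue_left (hT 1) hcompat]
  refine ⟨fun fg => glue (T 0) (T 1) (fg.1 0) (fg.1 1) fg.2,
    fun fg => glue_nonneg (hT 0) (hT 1) _ _ _, ?_, fun a b x y => ?_⟩
  · rw [Fintype.sum_prod_type_right, ← hnorm]
    refine sum_congr rfl fun g _ => ?_
    rw [Fintype.sum_fin_two_arrow]
    simp only [Fin.isValue, Matrix.cons_val_zero, Matrix.cons_val_one, Matrix.cons_val_fin_one,
      sum_glue_right (hT 0) hcompat]
  · rw [Fintype.sum_prod_type_right, ← hmarg]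
    refine sum_congr rfl fun g _ => ?_
    rw [← hglue x a g, sum_mul]

/-- The `Bool × Bool` table with total mass `s`, row `true` summing to `m`, column `true` summing
to `n`, and entry `c` at `(true, true)`. -/
def bitTable (s c m n : ℝ) (a b : Bool) : ℝ :=
  if a then (if b then c else m - c) else (if b then n - c else s - m - n + c)

theorem bitTable_nonneg_iff {s c m n : ℝ} :
    (∀ a b, 0 ≤ bitTable s c m n a b) ↔ 0 ≤ c ∧ c ≤ m ∧ c ≤ n ∧ m + n - s ≤ c := by
  simp only [Bool.forall_bool, bitTable, Bool.false_eq_true, if_false, if_true]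
  constructor
  · rintro ⟨⟨_, _⟩, _, _⟩
    refine ⟨?_, ?_, ?_, ?_⟩ <;> linarith
  · rintro ⟨_, _, _, _⟩
    refine ⟨⟨?_, ?_⟩, ?_, ?_⟩ <;> linarith

theorem sum_sum_bitTable (s c m n : ℝ) : ∑ a, ∑ b, bitTable s c m n a b = s := by
  simp only [Fintype.sum_bool, bitTable, if_true, Bool.false_eq_true, if_false]
  ring

theorem exists_eq_bitTable {X Y : Type*} [Nonempty X] [Nonempty Y]
    (p : Bool → Bool → X → Y → ℝ)
    (hnorm : ∀ x y, ∑ a, ∑ b, p a b x y = 1)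
    (hnsA : ∀ a x y y', ∑ b, p a b x y = ∑ b, p a b x y')
    (hnsB : ∀ b x x' y, ∑ a, p a b x y = ∑ a, p a b x' y) :
    ∃ (c : X → Y → ℝ) (m : X → ℝ) (n : Y → ℝ),
      p = fun a b x y => bitTable 1 (c x y) (m x) (n y) a b := by
  obtain ⟨x₀⟩ := ‹Nonempty X›
  obtain ⟨y₀⟩ := ‹Nonempty Y›
  refine ⟨fun x y => p true true x y, fun x => ∑ b, p true b x y₀,
    fun y => ∑ a, p a true x₀ y, ?_⟩
  funext a b x y
  have h₁ := hnorm x y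
  have h₂ := hnsA true x y y₀
  have h₃ := hnsB true x x₀ y
  simp only [Fintype.sum_bool] at h₁ h₂ h₃ ⊢
  cases a <;> cases b <;> simp only [bitTable, if_true, Bool.false_eq_true, if_false] <;> linarith

/-- The joint distribution of three bits `(a, b₀, b₁)` whose pairwise tables are
`bitTable 1 c₀ m n₀`, `bitTable 1 c₁ m n₁` and `bitTable 1 d n₀ n₁`, with mass `t` at
`(true, true, true)`. -/
def tripleTable (m c₀ c₁ n₀ n₁ d t : ℝ) (a : Bool) : Bool → Bool → ℝ :=
  if a then bitTable m t c₀ c₁ else bitTable (1 - m) (d - t) (n₀ - c₀) (n₁ - c₁)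

section TripleTable

variable (m c₀ c₁ n₀ n₁ d t : ℝ)

theorem sum_tripleTable_left (b₀ b₁ : Bool) :
    ∑ a, tripleTable m c₀ c₁ n₀ n₁ d t a b₀ b₁ = bitTable 1 d n₀ n₁ b₀ b₁ := by
  cases b₀ <;> cases b₁ <;> simp only [Fintype.sum_bool, tripleTable, bitTable, if_true,
    Bool.false_eq_true, if_false] <;> ring

theorem sum_tripleTable_middle (a b₁ : Bool) :
    ∑ b₀, tripleTable m c₀ c₁ n₀ n₁ d t a b₀ b₁ = bitTable 1 c₁ m n₁ a b₁ := by
  cases a <;> cases b₁ <;> simp only [Fintype.sum_bool, tripleTable, bitTable, if_true,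
    Bool.false_eq_true, if_false] <;> ring

theorem sum_tripleTable_right (a b₀ : Bool) :
    ∑ b₁, tripleTable m c₀ c₁ n₀ n₁ d t a b₀ b₁ = bitTable 1 c₀ m n₀ a b₀ := by
  cases a <;> cases b₀ <;> simp only [Fintype.sum_bool, tripleTable, bitTable, if_true,
    Bool.false_eq_true, if_false] <;> ring

end TripleTable

/-- `h₁`–`h₄` are the Bell inequalities of the three-bit marginal problem. -/
theorem exists_tripleTable_nonneg {m c₀ c₁ n₀ n₁ d : ℝ}
    (hA₀ : ∀ a b, 0 ≤ bitTable 1 c₀ m n₀ a b) (hA₁ : ∀ a b, 0 ≤ bitTable 1 c₁ m n₁ a b)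
    (hB : ∀ a b, 0 ≤ bitTable 1 d n₀ n₁ a b)
    (h₁ : c₀ + c₁ - m ≤ d) (h₂ : m + n₀ + n₁ - 1 - c₀ - c₁ ≤ d)
    (h₃ : d ≤ n₀ - c₀ + c₁) (h₄ : d ≤ n₁ - c₁ + c₀) :
    ∃ t, ∀ a b₀ b₁, 0 ≤ tripleTable m c₀ c₁ n₀ n₁ d t a b₀ b₁ := by
  obtain ⟨_, _, _, _⟩ := bitTable_nonneg_iff.1 hA₀
  obtain ⟨_, _, _, _⟩ := bitTable_nonneg_iff.1 hA₁
  obtain ⟨_, _, _, _⟩ := bitTable_nonneg_iff.1 hB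
  obtain ⟨t, ht_ge, ht_le⟩ := exists_between_of_forall_le
    (s := {0, c₀ + c₁ - m, c₀ + d - n₀, c₁ + d - n₁})
    (t := {c₀, c₁, d, d + 1 - m - n₀ - n₁ + c₀ + c₁}) (by simp) (by simp) (by
      simp only [Set.mem_insert_iff, Set.mem_singleton_iff]
      rintro _ (rfl | rfl | rfl | rfl) _ (rfl | rfl | rfl | rfl) <;> linarith)
  simp only [upperBounds_insert, lowerBounds_insert, upperBounds_singleton,
    lowerBounds_singleton, Set.mem_inter_iff, Set.mem_Ici, Set.mem_Iic] at ht_ge ht_le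
  refine ⟨t, Bool.forall_bool.2 ⟨bitTable_nonneg_iff.2 ?_, bitTable_nonneg_iff.2 ?_⟩⟩ <;>
    refine ⟨?_, ?_, ?_, ?_⟩ <;> linarith

theorem exists_bobTable (c : Fin 2 → Fin 2 → ℝ) (m n : Fin 2 → ℝ)
    (hpos : ∀ x y a b, 0 ≤ bitTable 1 (c x y) (m x) (n y) a b)
    (hCH : ∀ x x' y y', x ≠ x' → y ≠ y' →
      m x + n y - 1 ≤ c x y + c x y' + c x' y - c x' y' ∧
        c x y + c x y' + c x' y - c x' y' ≤ m x + n y) :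
    ∃ d, (∀ a b, 0 ≤ bitTable 1 d (n 0) (n 1) a b) ∧ ∀ x,
      c x 0 + c x 1 - m x ≤ d ∧ m x + n 0 + n 1 - 1 - c x 0 - c x 1 ≤ d ∧
        d ≤ n 0 - c x 0 + c x 1 ∧ d ≤ n 1 - c x 1 + c x 0 := by
  have hpos' := fun x y => bitTable_nonneg_iff.1 (hpos x y)
  obtain ⟨_, _, _, _⟩ := hpos' 0 0
  obtain ⟨_, _, _, _⟩ := hpos' 0 1
  obtain ⟨_, _, _, _⟩ := hpos' 1 0
  obtain ⟨_, _, _, _⟩ := hpos' 1 1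
  obtain ⟨_, _⟩ := hCH 0 1 0 1 (by decide) (by decide)
  obtain ⟨_, _⟩ := hCH 0 1 1 0 (by decide) (by decide)
  obtain ⟨_, _⟩ := hCH 1 0 0 1 (by decide) (by decide)
  obtain ⟨_, _⟩ := hCH 1 0 1 0 (by decide) (by decide)
  obtain ⟨d, hd_ge, hd_le⟩ := exists_between_of_forall_le
    (s := {0, n 0 + n 1 - 1, c 0 0 + c 0 1 - m 0, c 1 0 + c 1 1 - m 1,
      m 0 + n 0 + n 1 - 1 - c 0 0 - c 0 1, m 1 + n 0 + n 1 - 1 - c 1 0 - c 1 1})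
    (t := {n 0, n 1, n 0 - c 0 0 + c 0 1, n 1 - c 0 1 + c 0 0,
      n 0 - c 1 0 + c 1 1, n 1 - c 1 1 + c 1 0}) (by simp) (by simp) (by
      simp only [Set.mem_insert_iff, Set.mem_singleton_iff]
      rintro _ (rfl | rfl | rfl | rfl | rfl | rfl) _ (rfl | rfl | rfl | rfl | rfl | rfl) <;>
        linarith)
  simp only [upperBounds_insert, lowerBounds_insert, upperBounds_singleton,
    lowerBounds_singleton, Set.mem_inter_iff, Set.mem_Ici, Set.mem_Iic] at hd_ge hd_le
  refine ⟨d, bitTable_nonneg_iff.2 ⟨?_, ?_, ?_, ?_⟩, Fin.forall_fin_two.2 ⟨?_, ?_⟩⟩ <;>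
    try refine ⟨?_, ?_, ?_, ?_⟩
  all_goals linarith

theorem isLocal_of_ch (c : Fin 2 → Fin 2 → ℝ) (m n : Fin 2 → ℝ)
    (hpos : ∀ x y a b, 0 ≤ bitTable 1 (c x y) (m x) (n y) a b)
    (hCH : ∀ x x' y y', x ≠ x' → y ≠ y' →
      m x + n y - 1 ≤ c x y + c x y' + c x' y - c x' y' ∧
        c x y + c x y' + c x' y - c x' y' ≤ m x + n y) :
    IsLocal fun a b x y => bitTable 1 (c x y) (m x) (n y) a b := by
  obtain ⟨d, hD, hd⟩ := exists_bobTable c m n hpos hCH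
  choose t ht using fun x => exists_tripleTable_nonneg (hpos x 0) (hpos x 1) hD
    (hd x).1 (hd x).2.1 (hd x).2.2.1 (hd x).2.2.2
  refine isLocal_of_glue _
    (fun x a g => tripleTable (m x) (c x 0) (c x 1) (n 0) (n 1) d (t x) a (g 0) (g 1))
    (fun x a g => ht x a _ _) (fun g => by simp only [sum_tripleTable_left]) ?_
    fun a b x y => ?_
  · simp only [sum_tripleTable_left, Fintype.sum_fin_two_arrow, Matrix.cons_val_zero,
      Matrix.cons_val_one, Matrix.cons_val_fin_one]
    exact sum_sum_bitTable 1 d (n 0) (n 1)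
  · fin_cases x <;> fin_cases y <;>
      simp [Fintype.sum_fin_two_arrow, mul_ite, sum_ite_irrel, sum_tripleTable_right,
        sum_tripleTable_middle, -Fintype.univ_bool]

/-- Fine's theorem for the CH scenario: in the two-setting,
two-outcome bipartite scenario (outcomes `Bool`, with `true` standing for `+1`,
inputs `Fin 2`), any nonnegative, normalized, no-signalling behaviour
satisfying all symmetrized CH inequalities (obtained by relabelling the inputs
on each side and flipping the outcomes on each side) is a convex combination of
the 16 deterministic product behaviours. -/
theorem fine_theorem_ch
    (p : Bool → Bool → Fin 2 → Fin 2 → ℝ)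
    (hpos : ∀ a b x y, 0 ≤ p a b x y)
    (hnorm : ∀ x y, ∑ a, ∑ b, p a b x y = 1)
    (hnsA : ∀ a x y y', ∑ b, p a b x y = ∑ b, p a b x y')
    (hnsB : ∀ b x x' y, ∑ a, p a b x y = ∑ a, p a b x' y)
    (hCH : ∀ (x x' y y' : Fin 2), x ≠ x' → y ≠ y' → ∀ sa sb : Bool,
      p (xor true sa) (xor true sb) x y + p (xor true sa) (xor true sb) x y'
        + p (xor true sa) (xor true sb) x' y - p (xor true sa) (xor true sb) x' y'
        - (∑ b, p (xor true sa) b x y) - (∑ a, p a (xor true sb) x y) ≤ 0) :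
    ∃ w : (Fin 2 → Bool) × (Fin 2 → Bool) → ℝ,
      (∀ fg, 0 ≤ w fg) ∧ (∑ fg, w fg = 1) ∧
      (∀ a b x y, p a b x y = ∑ fg : (Fin 2 → Bool) × (Fin 2 → Bool),
        w fg * (if a = fg.1 x then 1 else 0) * (if b = fg.2 y then 1 else 0)) := by
  obtain ⟨c, m, n, rfl⟩ := exists_eq_bitTable p hnorm hnsA hnsB
  refine isLocal_of_ch c m n (fun x y a b => hpos a b x y) fun x x' y y' hx hy => ?_
  have hupper := hCH x x' y y' hx hy false false
  have hlower := hCH x x' y y' hx hy true false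
  simp only [Fintype.sum_bool, bitTable, Bool.xor_false, Bool.xor_true, Bool.not_true, if_true,
    Bool.false_eq_true, if_false] at hupper hlower
  constructor <;> linarith
end
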